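/- arXiv:2509.11418 — 2 statements merged into one kernel-verified Lean document; each statement's English description precedes it below -/
import Mathlib

section
/- The composite modality ○(●A) is contractible for every type A: the type ¶ → ●A always has exactly one element up to equality. -/
/-- The closed modality `●A`: quotient of `A ⊕ ¶` identifying `inl a` with `inr z`. -/
def Closed (P A : Type*) : Type _ :=
  Quot (fun x y : A ⊕ P => ∃ (a : A) (z : P), x = Sum.inl a ∧ y = Sum.inr z)

/-- `○(●A) = ¶ → ●A` is always contractible. -/
theorem open_closed_contractible (P : Type*) (hP : ∀ z w : P, z = w) (A : Type*) :
    ∃ c : P → Closed P A, ∀ f : P → Closed P A, f = c := by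
  refine ⟨fun z => Quot.mk _ (Sum.inr z), fun f => funext fun z => ?_⟩
  induction f z using Quot.ind with
  | _ x =>
    cases x with
    | inl a => exact Quot.sound ⟨a, z, rfl, rfl⟩
    | inr w => exact congrArg _ (congrArg _ (hP w z))
end

section
/- Large elimination of glued booleans is well-defined and satisfies both β laws: given the glued boolean GBool := Σ (b : tm bool), Plus b where Plus b := PLift (b = tt) ⊕ PLift (b = ff), define TRUE := ⟨tt, Sum.inl ⟨rfl⟩⟩ and FALSE := ⟨ff, Sum.inr ⟨rfl⟩⟩, and define IF : ∀ (C : GBool → Type), ∀ (b : GBool), C TRUE → C FALSE → C b by case analysis on the second component using the equality proofs. Then IF C TRUE t f = t and IF C FALSE t f = f. -/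
/-- An algebraic signature of a type theory with booleans. -/
structure BoolSig where
  tp : Type
  tm : tp → Type
  bool : tp
  tt : tm bool
  ff : tm bool

/-- Canonicity data for a syntactic boolean. -/
def BoolSig.Plus (S : BoolSig) (b : S.tm S.bool) : Type :=
  PLift (b = S.tt) ⊕ PLift (b = S.ff)

/-- The glued boolean type. -/
def BoolSig.GBool (S : BoolSig) : Type :=
  Σ b : S.tm S.bool, S.Plus b

/-- The glued true. -/
def BoolSig.TRUE (S : BoolSig) : S.GBool := ⟨S.tt, Sum.inl ⟨rfl⟩⟩

/-- The glued false. -/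
def BoolSig.FALSE (S : BoolSig) : S.GBool := ⟨S.ff, Sum.inr ⟨rfl⟩⟩

/-- Large elimination of glued booleans, by case analysis on the canonicity data,
transporting along the stored equality. -/
def BoolSig.IF (S : BoolSig) (C : S.GBool → Type) (b : S.GBool)
    (t : C S.TRUE) (f : C S.FALSE) : C b := by
  obtain ⟨bv, hp⟩ := b
  cases hp with
  | inl h =>
    obtain ⟨h⟩ := h
    subst h
    exact t
  | inr h =>
    obtain ⟨h⟩ := h
    subst h
    exact f

/-- Both β laws for large elimination of glued booleans. -/
theorem glued_if_beta (S : BoolSig) (hne : S.tt ≠ S.ff)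
    (C : S.GBool → Type) (t : C S.TRUE) (f : C S.FALSE) :
    S.IF C S.TRUE t f = t ∧ S.IF C S.FALSE t f = f := by
  exact ⟨rfl, rfl⟩
end
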